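/- arXiv:1712.05826 — 4 statements merged into one kernel-verified Lean document; each statement's English description precedes it below -/
import Mathlib

section
/- Let f : X → Y be a continuous map between CAT(0) metric spaces, and let Sing(f) denote the set of points of X at which f is not a local isometry. If x ≠ x' are points of X with f(x) = f(x'), then d_X(x, x') ≥ d_X(x, Sing(f)) + d_X(x', Sing(f)). -/
/-- A map `γ : ℝ → X` is a geodesic on the interval `[a,b]`:
it preserves distances between parameters in `[a,b]`. -/
def IsGeodesicOn {X : Type*} [MetricSpace X] (γ : ℝ → X) (a b : ℝ) : Prop :=
  ∀ s ∈ Set.Icc a b, ∀ t ∈ Set.Icc a b, dist (γ s) (γ t) = |s - t|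

/-- A metric space is geodesic if any two points are joined by a geodesic. -/
def GeodesicSpace (X : Type*) [MetricSpace X] : Prop :=
  ∀ x y : X, ∃ γ : ℝ → X, γ 0 = x ∧ γ (dist x y) = y ∧ IsGeodesicOn γ 0 (dist x y)

/-- A metric space is CAT(0) if it is geodesic and satisfies the Bruhat–Tits CN inequality:
for any point `x` and any midpoint `m` of `y` and `z`,
`d(x,m)² ≤ (d(x,y)² + d(x,z)²)/2 − d(y,z)²/4`.  For geodesic spaces this is equivalent to
the comparison-triangle definition of CAT(0). -/
def CAT0 (X : Type*) [MetricSpace X] : Prop :=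
  GeodesicSpace X ∧
  ∀ x y z m : X, dist y m = dist y z / 2 → dist m z = dist y z / 2 →
    dist x m ^ 2 ≤ (dist x y ^ 2 + dist x z ^ 2) / 2 - dist y z ^ 2 / 4

/-- `f` is a local isometry at `p` if it preserves distances on some neighbourhood of `p`. -/
def IsLocalIsometryAt {X Y : Type*} [MetricSpace X] [MetricSpace Y] (f : X → Y) (p : X) : Prop :=
  ∃ ε > 0, ∀ a ∈ Metric.ball p ε, ∀ b ∈ Metric.ball p ε, dist (f a) (f b) = dist a b

/-- The singular set of `f`: the points where `f` is not a local isometry. -/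
def singularSet {X Y : Type*} [MetricSpace X] [MetricSpace Y] (f : X → Y) : Set X :=
  {p | ¬ IsLocalIsometryAt f p}

/-- **Lemma 1.2.**  Let `f : X → Y` be a continuous map of complete CAT(0) metric spaces,
and suppose `x ≠ x'` but `f x = f x'`.  Then `d(x,x')` is at least the sum of the distances
from `x` and `x'` to the singular set of `f`. -/
theorem cat0_dist_ge_sum_infDist_singular
    {X Y : Type*} [MetricSpace X] [MetricSpace Y]
    [CompleteSpace X] [CompleteSpace Y]
    (hX : CAT0 X) (hY : CAT0 Y)
    (f : X → Y) (hf : Continuous f)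
    (x x' : X) (hne : x ≠ x') (hfx : f x = f x') :
    Metric.infDist x (singularSet f) + Metric.infDist x' (singularSet f) ≤ dist x x' := by
  by_contra hcon
  push_neg at hcon
  obtain ⟨γ, hγ0, hγL, hγ⟩ := hX.1 x x'
  set L := dist x x' with hLdef
  have hL : 0 < L := dist_pos.2 hne
  have hmemL : (0:ℝ) ∈ Set.Icc (0:ℝ) L := ⟨le_refl _, hL.le⟩
  have hmemR : L ∈ Set.Icc (0:ℝ) L := ⟨hL.le, le_refl _⟩
  -- every point of the geodesic is nonsingular
  have hns : ∀ t ∈ Set.Icc (0:ℝ) L, IsLocalIsometryAt f (γ t) := by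
    intro t ht
    by_contra hmem
    have hmem' : γ t ∈ singularSet f := hmem
    have hd1 : dist x (γ t) = t := by
      have := hγ 0 hmemL t ht
      rw [hγ0] at this
      rw [this, zero_sub, abs_neg, abs_of_nonneg ht.1]
    have hd2 : dist x' (γ t) = L - t := by
      have := hγ L hmemR t ht
      rw [hγL] at this
      rw [this, abs_of_nonneg (by linarith [ht.2])]
    have h1 : Metric.infDist x (singularSet f) ≤ t := by
      have := Metric.infDist_le_dist_of_mem (x := x) hmem'
      linarith [hd1 ▸ this]
    have h2 : Metric.infDist x' (singularSet f) ≤ L - t := by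
      have := Metric.infDist_le_dist_of_mem (x := x') hmem'
      linarith [hd2 ▸ this]
    linarith
  -- local isometry of f ∘ γ
  have key : ∀ t ∈ Set.Icc (0:ℝ) L, ∃ ε > 0, ∀ s ∈ Set.Icc (0:ℝ) L, ∀ u ∈ Set.Icc (0:ℝ) L,
      |s - t| < ε → |u - t| < ε → dist (f (γ s)) (f (γ u)) = |s - u| := by
    intro t ht
    obtain ⟨ε, hε, hiso⟩ := hns t ht
    refine ⟨ε, hε, fun s hs u hu hst hut => ?_⟩
    have h1 : γ s ∈ Metric.ball (γ t) ε := by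
      rw [Metric.mem_ball, hγ s hs t ht]; exact hst
    have h2 : γ u ∈ Metric.ball (γ t) ε := by
      rw [Metric.mem_ball, hγ u hu t ht]; exact hut
    rw [hiso _ h1 _ h2, hγ s hs u hu]
  -- the good set
  set A : Set ℝ := {t | t ∈ Set.Icc (0:ℝ) L ∧
    ∀ s ∈ Set.Icc (0:ℝ) t, dist (f (γ 0)) (f (γ s)) = s} with hAdef
  have hA0 : (0:ℝ) ∈ A := by
    refine ⟨hmemL, fun s hs => ?_⟩
    have : s = 0 := le_antisymm hs.2 hs.1
    simp [this]
  have hAne : A.Nonempty := ⟨0, hA0⟩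
  have hAbdd : BddAbove A := ⟨L, fun t ht => ht.1.2⟩
  set T := sSup A with hTdef
  have hTmem : T ∈ Set.Icc (0:ℝ) L := ⟨le_csSup hAbdd hA0, csSup_le hAne fun t ht => ht.1.2⟩
  -- T is positive
  obtain ⟨ε0, hε0, hloc0⟩ := key 0 hmemL
  have ht0A : min (ε0/2) L ∈ A := by
    constructor
    · exact ⟨le_min (by linarith) hL.le, min_le_right _ _⟩
    · intro s hs
      have hsL : s ∈ Set.Icc (0:ℝ) L := ⟨hs.1, hs.2.trans (min_le_right _ _)⟩
      have h1 : |(0:ℝ) - 0| < ε0 := by simp [hε0]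
      have h2 : |s - 0| < ε0 := by
        rw [sub_zero, abs_of_nonneg hs.1]
        exact lt_of_le_of_lt (hs.2.trans (min_le_left _ _)) (by linarith)
      have := hloc0 0 hmemL s hsL h1 h2
      rw [this, zero_sub, abs_neg, abs_of_nonneg hs.1]
  have hTpos : 0 < T := lt_of_lt_of_le (lt_min (by linarith) hL) (le_csSup hAbdd ht0A)
  -- T belongs to A
  obtain ⟨ε, hε, hloc⟩ := key T hTmem
  have hTA : T ∈ A := by
    refine ⟨hTmem, fun s hs => ?_⟩
    rcases lt_or_eq_of_le hs.2 with hsT | hsT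
    · obtain ⟨t, htA, hst⟩ := exists_lt_of_lt_csSup hAne hsT
      exact htA.2 s ⟨hs.1, hst.le⟩
    · subst hsT
      -- s = T : approximate from below
      have hget : ∀ u : ℝ, 0 < u → u ≤ min (ε/2) T →
          T - 2*u ≤ dist (f (γ 0)) (f (γ T)) ∧ dist (f (γ 0)) (f (γ T)) ≤ T := by
        intro u hu huu
        have h1 : T - u < T := by linarith
        obtain ⟨t, htA, hst⟩ := exists_lt_of_lt_csSup hAne h1
        have htT : t ≤ T := le_csSup hAbdd htA
        have ht0 : 0 ≤ t := htA.1.1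
        have hdA : dist (f (γ 0)) (f (γ t)) = t := htA.2 t ⟨ht0, le_refl _⟩
        have htIcc : t ∈ Set.Icc (0:ℝ) L := htA.1
        have habs : |t - T| < ε := by
          rw [abs_of_nonpos (by linarith)]
          have : u ≤ ε/2 := huu.trans (min_le_left _ _)
          linarith
        have hTT : |T - T| < ε := by simp [hε]
        have hdl : dist (f (γ t)) (f (γ T)) = T - t := by
          have := hloc t htIcc T hTmem habs hTT
          rw [this, abs_of_nonpos (by linarith), neg_sub]
        constructor
        · have := dist_triangle (f (γ 0)) (f (γ T)) (f (γ t))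
          rw [dist_comm (f (γ T)) (f (γ t)), hdA, hdl] at this
          linarith
        · have := dist_triangle (f (γ 0)) (f (γ t)) (f (γ T))
          rw [hdA, hdl] at this
          linarith
      have hub : dist (f (γ 0)) (f (γ T)) ≤ T := by
        have h := hget (min (ε/2) T) (lt_min (by linarith) hTpos) (le_refl _)
        exact h.2
      have hlb : T ≤ dist (f (γ 0)) (f (γ T)) := by
        by_contra hd
        push_neg at hd
        set D := dist (f (γ 0)) (f (γ T))
        set u := min (min (ε/2) T) ((T - D)/3) with hu
        have hu0 : 0 < u := lt_min (lt_min (by linarith) hTpos) (by linarith)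
        have h := hget u hu0 (min_le_left _ _)
        have : u ≤ (T - D)/3 := min_le_right _ _
        linarith [h.1]
      linarith [le_antisymm hub hlb]
  -- T = L, else extend
  rcases lt_or_eq_of_le hTmem.2 with hTL | hTL
  · -- extension step: contradiction with sSup
    set h := min (min (ε/4) T) (L - T) with hhdef
    have hh0 : 0 < h := lt_min (lt_min (by linarith) hTpos) (by linarith)
    have hhε : h < ε := lt_of_le_of_lt ((min_le_left _ _).trans (min_le_left _ _)) (by linarith)
    have hhT : h ≤ T := (min_le_left _ _).trans (min_le_right _ _)
    have hhL : h ≤ L - T := min_le_right _ _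
    have hy : T - h ∈ Set.Icc (0:ℝ) L := ⟨by linarith, by linarith [hTmem.2]⟩
    have hz : T + h ∈ Set.Icc (0:ℝ) L := ⟨by linarith [hTmem.1], by linarith⟩
    have hdy : dist (f (γ 0)) (f (γ (T - h))) = T - h := hTA.2 (T - h) ⟨by linarith, by linarith⟩
    have hdT : dist (f (γ 0)) (f (γ T)) = T := hTA.2 T ⟨hTmem.1, le_refl _⟩
    have habs1 : |T - h - T| < ε := by rw [show T - h - T = -h by ring, abs_neg, abs_of_nonneg hh0.le]; exact hhε
    have habs2 : |T + h - T| < ε := by rw [show T + h - T = h by ring, abs_of_nonneg hh0.le]; exact hhε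
    have habsT : |T - T| < ε := by simp [hε]
    have hdm1 : dist (f (γ (T - h))) (f (γ T)) = h := by
      have := hloc (T - h) hy T hTmem habs1 habsT
      rw [this, show T - h - T = -h by ring, abs_neg, abs_of_nonneg hh0.le]
    have hdm2 : dist (f (γ T)) (f (γ (T + h))) = h := by
      have := hloc T hTmem (T + h) hz habsT habs2
      rw [this, show T - (T + h) = -h by ring, abs_neg, abs_of_nonneg hh0.le]
    have hdyz : dist (f (γ (T - h))) (f (γ (T + h))) = 2 * h := by
      have := hloc (T - h) hy (T + h) hz habs1 habs2
      rw [this, show T - h - (T + h) = -(2*h) by ring, abs_neg, abs_of_nonneg (by linarith)]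
    have hCN := hY.2 (f (γ 0)) (f (γ (T - h))) (f (γ (T + h))) (f (γ T))
      (by rw [hdm1, hdyz]; ring) (by rw [hdm2, hdyz]; ring)
    set D := dist (f (γ 0)) (f (γ (T + h))) with hDdef
    have hDub : D ≤ T + h := by
      have := dist_triangle (f (γ 0)) (f (γ T)) (f (γ (T + h)))
      rw [hdT, hdm2] at this
      linarith
    have hDlb : T + h ≤ D := by
      rw [hdT, hdy, hdyz] at hCN
      nlinarith [@dist_nonneg Y _ (f (γ 0)) (f (γ (T + h)))]
    have hDeq : D = T + h := le_antisymm hDub hDlb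
    -- T + h ∈ A
    have hThA : T + h ∈ A := by
      refine ⟨hz, fun s hs => ?_⟩
      rcases le_or_gt s T with hsT | hsT
      · exact hTA.2 s ⟨hs.1, hsT⟩
      · have hsIcc : s ∈ Set.Icc (0:ℝ) L := ⟨hs.1, by linarith [hs.2]⟩
        have habss : |s - T| < ε := by
          rw [abs_of_nonneg (by linarith)]
          linarith [hs.2]
        have hd1 : dist (f (γ T)) (f (γ s)) = s - T := by
          have := hloc T hTmem s hsIcc habsT habss
          rw [this, abs_of_nonpos (by linarith), neg_sub]
        have hd2 : dist (f (γ s)) (f (γ (T + h))) = T + h - s := by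
          have := hloc s hsIcc (T + h) hz habss habs2
          rw [this, abs_of_nonpos (by linarith [hs.2]), neg_sub]
        have hub : dist (f (γ 0)) (f (γ s)) ≤ s := by
          have := dist_triangle (f (γ 0)) (f (γ T)) (f (γ s))
          rw [hdT, hd1] at this
          linarith
        have hlb : s ≤ dist (f (γ 0)) (f (γ s)) := by
          have := dist_triangle (f (γ 0)) (f (γ s)) (f (γ (T + h)))
          rw [hd2, ← hDdef, hDeq] at this
          linarith
        linarith
    have : T + h ≤ T := le_csSup hAbdd hThA
    linarith
  · -- T = L : contradiction with f x = f x'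
    have hdL : dist (f (γ 0)) (f (γ L)) = L := by
      rw [← hTL] at hmemR ⊢
      exact hTA.2 T ⟨hTmem.1, le_refl _⟩
    rw [hγ0, hγL, hfx, dist_self] at hdL
    linarith
end

section
/- For a connected simplicial graph Γ, the taut loop length spectrum H(Γ) equals the set of natural numbers l for which the map π₁(Γ_l) → π₁(Γ_{l+1}) induced by inclusion is not an isomorphism. -/
open SimpleGraph

/-- Combinatorial homotopy of walks in the 2-complex `Γ_l` obtained from a graph `Γ` by
attaching a 2-cell along each closed edge loop of length strictly less than `l`.  It is
the equivalence relation on walks generated by: congruence under concatenation, removal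
of backtracks, and collapsing closed loops of length `< l` (the boundaries of 2-cells).
Two walks are related iff they are homotopic rel endpoints in `Γ_l`. -/
inductive WalkHomotopic {V : Type*} (Γ : SimpleGraph V) (l : ℕ) :
    ∀ {a b : V}, Γ.Walk a b → Γ.Walk a b → Prop
  | refl {a b : V} (p : Γ.Walk a b) : WalkHomotopic Γ l p p
  | symm {a b : V} {p q : Γ.Walk a b} :
      WalkHomotopic Γ l p q → WalkHomotopic Γ l q p
  | trans {a b : V} {p q r : Γ.Walk a b} :
      WalkHomotopic Γ l p q → WalkHomotopic Γ l q r → WalkHomotopic Γ l p r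
  | append_congr {a b c : V} {p p' : Γ.Walk a b} {q q' : Γ.Walk b c} :
      WalkHomotopic Γ l p p' → WalkHomotopic Γ l q q' →
      WalkHomotopic Γ l (p.append q) (p'.append q')
  | backtrack {a b c : V} (h : Γ.Adj a b) (p : Γ.Walk a c) :
      WalkHomotopic Γ l (SimpleGraph.Walk.cons h (SimpleGraph.Walk.cons h.symm p)) p
  | cell {a : V} (c : Γ.Walk a a) (hc : c.length < l) :
      WalkHomotopic Γ l c SimpleGraph.Walk.nil

/-- A closed edge loop of length `l` in `Γ` is taut if it is not null-homotopic in the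
2-complex `Γ_l` (whose 2-cells are glued along all loops of length `< l`). -/
def IsTautLoop {V : Type*} (Γ : SimpleGraph V) {a : V} (c : Γ.Walk a a) : Prop :=
  ¬ WalkHomotopic Γ c.length c SimpleGraph.Walk.nil

/-- Bowditch's taut loop length spectrum `H(Γ)`: the set of lengths of taut loops. -/
def tautSpectrum {V : Type*} (Γ : SimpleGraph V) : Set ℕ :=
  {l | ∃ (a : V) (c : Γ.Walk a a), c.length = l ∧ IsTautLoop Γ c}

/-- The fundamental group (as a pointed set of homotopy classes of loops) of the
2-complex `Γ_l`, based at `v`: closed walks at `v` modulo homotopy in `Γ_l`. -/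
def pi1 {V : Type*} (Γ : SimpleGraph V) (l : ℕ) (v : V) : Type _ :=
  Quot (fun p q : Γ.Walk v v => WalkHomotopic Γ l p q)

/-- Homotopy in `Γ_l` implies homotopy in `Γ_{l'}` for `l ≤ l'`. -/
theorem WalkHomotopic.mono {V : Type*} {Γ : SimpleGraph V} {l l' : ℕ} (h : l ≤ l')
    {a b : V} {p q : Γ.Walk a b} (hp : WalkHomotopic Γ l p q) :
    WalkHomotopic Γ l' p q := by
  induction hp with
  | refl p => exact .refl p
  | symm _ ih => exact .symm ih
  | trans _ _ ih₁ ih₂ => exact .trans ih₁ ih₂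
  | append_congr _ _ ih₁ ih₂ => exact .append_congr ih₁ ih₂
  | backtrack h p => exact .backtrack h p
  | cell c hc => exact .cell c (lt_of_lt_of_le hc h)

/-- The map `π₁(Γ_l) → π₁(Γ_{l+1})` induced by the inclusion `Γ_l ⊆ Γ_{l+1}`. -/
def pi1Map {V : Type*} (Γ : SimpleGraph V) (l : ℕ) (v : V) :
    pi1 Γ l v → pi1 Γ (l + 1) v :=
  Quot.map id (fun _ _ h => h.mono (Nat.le_succ l))


namespace WalkHomotopic

variable {V : Type*} {Γ : SimpleGraph V} {l : ℕ}

theorem cons_congr {a b c : V} (h : Γ.Adj a b) {p q : Γ.Walk b c}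
    (hpq : WalkHomotopic Γ l p q) :
    WalkHomotopic Γ l (Walk.cons h p) (Walk.cons h q) := by
  have := WalkHomotopic.append_congr (.refl (Walk.cons h .nil)) hpq
  simpa using this

theorem append_reverse {a b : V} (p : Γ.Walk a b) :
    WalkHomotopic Γ l (p.append p.reverse) .nil := by
  induction p with
  | nil => exact .refl _
  | @cons u x w h q ih =>
    rw [Walk.reverse_cons, Walk.cons_append]
    rw [show q.append (q.reverse.append (Walk.cons h.symm .nil))
        = (q.append q.reverse).append (Walk.cons h.symm .nil) from
      Walk.append_assoc q q.reverse _]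
    have h1 : WalkHomotopic Γ l ((q.append q.reverse).append (Walk.cons h.symm .nil))
        (Walk.cons h.symm .nil) := by
      have := WalkHomotopic.append_congr ih (.refl (Walk.cons h.symm .nil))
      simpa using this
    exact (cons_congr h h1).trans (.backtrack h .nil)

theorem reverse_append {a b : V} (p : Γ.Walk a b) :
    WalkHomotopic Γ l (p.reverse.append p) .nil := by
  have := append_reverse (Γ := Γ) (l := l) p.reverse
  rwa [Walk.reverse_reverse] at this

theorem of_quot_eq {a : V} {p q : Γ.Walk a a}
    (h : (Quot.mk _ p : pi1 Γ l a) = Quot.mk _ q) : WalkHomotopic Γ l p q := by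
  have H := Quot.eqvGen_exact h
  clear h
  induction H with
  | rel _ _ h => exact h
  | refl _ => exact .refl _
  | symm _ _ _ ih => exact ih.symm
  | trans _ _ _ _ _ ih1 ih2 => exact ih1.trans ih2

end WalkHomotopic

/-- For a connected simplicial graph `Γ`, the taut loop length spectrum `H(Γ)` equals the
set of natural numbers `l` for which the map `π₁(Γ_l) → π₁(Γ_{l+1})` induced by inclusion
is not an isomorphism (equivalently, not a bijection: the induced homomorphism is always
surjective). -/
theorem tautSpectrum_eq_non_iso_levels
    {V : Type*} (Γ : SimpleGraph V) (hΓ : Γ.Connected) (v : V) :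
    tautSpectrum Γ = {l : ℕ | ¬ Function.Bijective (pi1Map Γ l v)} := by
  ext l
  simp only [tautSpectrum, Set.mem_setOf_eq]
  constructor
  · rintro ⟨a, c, hlen, htaut⟩ hbij
    obtain ⟨w⟩ := hΓ v a
    set P : Γ.Walk v v := w.append (c.append w.reverse) with hP
    have himg : pi1Map Γ l v (Quot.mk _ P) = pi1Map Γ l v (Quot.mk _ .nil) := by
      apply Quot.sound
      have hc : WalkHomotopic Γ (l + 1) c .nil := .cell c (by omega)
      have h1 : WalkHomotopic Γ (l + 1) P (w.append w.reverse) := by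
        have := WalkHomotopic.append_congr (.refl w)
          (WalkHomotopic.append_congr hc (.refl w.reverse))
        simpa [hP] using this
      exact h1.trans (WalkHomotopic.append_reverse w)
    have heq := hbij.injective himg
    have hPl : WalkHomotopic Γ l P .nil := WalkHomotopic.of_quot_eq heq
    have hXc : WalkHomotopic Γ l (w.reverse.append (P.append w)) c := by
      have e : w.reverse.append (P.append w)
          = (w.reverse.append w).append (c.append (w.reverse.append w)) := by
        simp [hP, Walk.append_assoc]
      rw [e]
      have h1 := WalkHomotopic.reverse_append (Γ := Γ) (l := l) w
      have h2 := WalkHomotopic.append_congr h1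
        (WalkHomotopic.append_congr (.refl c) h1)
      have h3 : WalkHomotopic Γ l (c.append .nil) c := by
        rw [Walk.append_nil]; exact .refl c
      exact h2.trans h3
    have hXnil : WalkHomotopic Γ l (w.reverse.append (P.append w)) .nil := by
      have h1 : WalkHomotopic Γ l (w.reverse.append (P.append w))
          (w.reverse.append w) :=
        WalkHomotopic.append_congr (.refl w.reverse)
          (WalkHomotopic.append_congr hPl (.refl w))
      exact h1.trans (WalkHomotopic.reverse_append w)
    apply htaut
    show WalkHomotopic Γ c.length c .nil
    rw [hlen]
    exact hXc.symm.trans hXnil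
  · intro hniso
    by_contra hns
    apply hniso
    have key : ∀ {a b : V} {p q : Γ.Walk a b},
        WalkHomotopic Γ (l + 1) p q → WalkHomotopic Γ l p q := by
      intro a b p q h
      induction h with
      | refl p => exact .refl p
      | symm _ ih => exact ih.symm
      | trans _ _ ih1 ih2 => exact ih1.trans ih2
      | append_congr _ _ ih1 ih2 => exact .append_congr ih1 ih2
      | backtrack h p => exact .backtrack h p
      | cell c hc =>
        rcases Nat.lt_succ_iff_lt_or_eq.mp hc with h' | h'
        · exact .cell c h'
        · by_contra hcc
          exact hns ⟨_, c, h', by rw [IsTautLoop, h']; exact hcc⟩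
    constructor
    · intro x y h
      induction x using Quot.ind with | _ p =>
      induction y using Quot.ind with | _ q =>
      exact Quot.sound (key (WalkHomotopic.of_quot_eq h))
    · intro y
      induction y using Quot.ind with | _ p =>
      exact ⟨Quot.mk _ p, rfl⟩
end

section
/- If connected simplicial graphs Γ and Λ are k-quasi-isometric, then their taut loop length spectra H(Γ) and H(Λ) are k-related: for all l ≥ k² + 2k + 2, if l ∈ H(Γ) then there exists l' ∈ H(Λ) with l/k ≤ l' ≤ lk, and vice versa. -/
open SimpleGraph

/-- Bowditch's notion of `k`-quasi-isometry between connected graphs: a pair of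
`k`-Lipschitz maps between the vertex sets (with the edge-path metric `SimpleGraph.dist`)
whose composites displace every vertex by at most `k`. -/
def BowditchQI {V W : Type*} (Γ : SimpleGraph V) (Λ : SimpleGraph W) (k : ℕ) : Prop :=
  ∃ (φ : V → W) (ψ : W → V),
    (∀ x y : V, Λ.dist (φ x) (φ y) ≤ k * Γ.dist x y) ∧
    (∀ x y : W, Γ.dist (ψ x) (ψ y) ≤ k * Λ.dist x y) ∧
    (∀ x : V, Γ.dist x (ψ (φ x)) ≤ k) ∧
    (∀ y : W, Λ.dist y (φ (ψ y)) ≤ k)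

section BowditchAux

open SimpleGraph.Walk

variable {V : Type*} {W : Type*} {Γ : SimpleGraph V} {Λ : SimpleGraph W}

private lemma WH.cons_congr {l : ℕ} {a b c : V} (h : Γ.Adj a b) {p q : Γ.Walk b c}
    (hpq : WalkHomotopic Γ l p q) :
    WalkHomotopic Γ l (SimpleGraph.Walk.cons h p) (SimpleGraph.Walk.cons h q) := by
  have := WalkHomotopic.append_congr (.refl (SimpleGraph.Walk.cons h .nil)) hpq
  simpa using this

/-- `p⁻¹ ++ p` is null-homotopic (using only backtrack moves). -/
private lemma WH.reverse_append_self {l : ℕ} {a b : V} (p : Γ.Walk a b) :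
    WalkHomotopic Γ l (p.reverse.append p) .nil := by
  induction p with
  | nil => exact .refl _
  | cons h p ih =>
    rename_i x y z
    have e : ((SimpleGraph.Walk.cons h p).reverse).append (SimpleGraph.Walk.cons h p)
        = p.reverse.append (SimpleGraph.Walk.cons h.symm (SimpleGraph.Walk.cons h p)) := by
      simp [SimpleGraph.Walk.reverse_cons, ← SimpleGraph.Walk.append_assoc,
        SimpleGraph.Walk.cons_append, SimpleGraph.Walk.nil_append]
    rw [e]
    have hb : WalkHomotopic Γ l (SimpleGraph.Walk.cons h.symm (SimpleGraph.Walk.cons h p)) p :=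
      WalkHomotopic.backtrack h.symm p
    exact .trans (.append_congr (.refl p.reverse) hb) ih

private lemma WH.append_reverse_self {l : ℕ} {a b : V} (p : Γ.Walk a b) :
    WalkHomotopic Γ l (p.append p.reverse) .nil := by
  have := WH.reverse_append_self (Γ := Γ) (l := l) p.reverse
  rwa [SimpleGraph.Walk.reverse_reverse] at this

/-- Two walks with the same endpoints whose total length is `< l` are homotopic in `Γ_l`. -/
private lemma WH.of_length_add_lt {l : ℕ} {a b : V} (r s : Γ.Walk a b)
    (h : r.length + s.length < l) : WalkHomotopic Γ l r s := by
  have hcell : WalkHomotopic Γ l (r.append s.reverse) .nil := by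
    refine WalkHomotopic.cell _ ?_
    simpa [SimpleGraph.Walk.length_append, SimpleGraph.Walk.length_reverse] using h
  have h1 : WalkHomotopic Γ l ((r.append s.reverse).append s) s := by
    have := WalkHomotopic.append_congr hcell (.refl s)
    simpa using this
  have h2 : WalkHomotopic Γ l ((r.append s.reverse).append s) r := by
    rw [← SimpleGraph.Walk.append_assoc]
    have := WalkHomotopic.append_congr (.refl r) (WH.reverse_append_self (l := l) s)
    simpa using this
  exact .trans (.symm h2) h1

/-- Right cancellation against a fixed walk. -/
private lemma WH.cancel_right {l : ℕ} {a b d : V} {p q : Γ.Walk a b}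
    (r : Γ.Walk b d)
    (hr : WalkHomotopic Γ l (r.append r.reverse) .nil)
    (h : WalkHomotopic Γ l (p.append r) (q.append r)) :
    WalkHomotopic Γ l p q := by
  have h1 : WalkHomotopic Γ l ((p.append r).append r.reverse)
      ((q.append r).append r.reverse) := .append_congr h (.refl _)
  rw [← SimpleGraph.Walk.append_assoc, ← SimpleGraph.Walk.append_assoc] at h1
  have h2 : WalkHomotopic Γ l (p.append (r.append r.reverse)) p := by
    have := WalkHomotopic.append_congr (.refl p) hr
    simpa using this
  have h3 : WalkHomotopic Γ l (q.append (r.append r.reverse)) q := by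
    have := WalkHomotopic.append_congr (.refl q) hr
    simpa using this
  exact .trans (.symm h2) (.trans h1 h3)

/-- A chosen geodesic between two vertices of a connected graph. -/
private noncomputable def geo (hΛ : Λ.Connected) (x y : W) : Λ.Walk x y :=
  (hΛ.exists_walk_length_eq_dist x y).choose

private lemma geo_length (hΛ : Λ.Connected) (x y : W) :
    (geo hΛ x y).length = Λ.dist x y :=
  (hΛ.exists_walk_length_eq_dist x y).choose_spec

/-- Push a walk forward through a vertex map, filling in chosen geodesics. -/
private noncomputable def pushWalk (hΛ : Λ.Connected) (f : V → W) :
    ∀ {a b : V}, Γ.Walk a b → Λ.Walk (f a) (f b)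
  | _, _, .nil => .nil
  | _, _, .cons (u := a) (v := b) h p => (geo hΛ (f a) (f b)).append (pushWalk hΛ f p)

@[simp] private lemma pushWalk_nil (hΛ : Λ.Connected) (f : V → W) {a : V} :
    pushWalk hΛ f (.nil : Γ.Walk a a) = .nil := rfl

@[simp] private lemma pushWalk_cons (hΛ : Λ.Connected) (f : V → W) {a b c : V}
    (h : Γ.Adj a b) (p : Γ.Walk b c) :
    pushWalk hΛ f (.cons h p) = (geo hΛ (f a) (f b)).append (pushWalk hΛ f p) := rfl

private lemma pushWalk_append (hΛ : Λ.Connected) (f : V → W) {a b c : V}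
    (p : Γ.Walk a b) (q : Γ.Walk b c) :
    pushWalk hΛ f (p.append q) = (pushWalk hΛ f p).append (pushWalk hΛ f q) := by
  induction p with
  | nil => simp
  | cons h p ih => simp [ih, SimpleGraph.Walk.append_assoc]

private lemma pushWalk_length (hΛ : Λ.Connected) (f : V → W) {k : ℕ}
    (hf : ∀ a b : V, Γ.Adj a b → Λ.dist (f a) (f b) ≤ k) {a b : V} (p : Γ.Walk a b) :
    (pushWalk hΛ f p).length ≤ k * p.length := by
  induction p with
  | nil => simp
  | cons h p ih =>
    rename_i x y z
    simp only [pushWalk_cons, SimpleGraph.Walk.length_append, SimpleGraph.Walk.length_cons]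
    calc (geo hΛ (f x) (f y)).length + (pushWalk hΛ f p).length
        ≤ k + k * p.length := by
          have := hf x y h
          rw [geo_length]
          omega
      _ = k * (p.length + 1) := by ring

/-- Pushing forward preserves homotopy, with a rescaled threshold. -/
private lemma pushWalk_homotopic (hΛ : Λ.Connected) (f : V → W) {k l m : ℕ}
    (hf : ∀ a b : V, Γ.Adj a b → Λ.dist (f a) (f b) ≤ k)
    (hcell : ∀ n : ℕ, n < l → k * n < m) (hbk : 2 * k < m)
    {a b : V} {p q : Γ.Walk a b} (h : WalkHomotopic Γ l p q) :
    WalkHomotopic Λ m (pushWalk hΛ f p) (pushWalk hΛ f q) := by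
  induction h with
  | refl p => exact .refl _
  | symm _ ih => exact .symm ih
  | trans _ _ ih₁ ih₂ => exact .trans ih₁ ih₂
  | append_congr _ _ ih₁ ih₂ =>
    rw [pushWalk_append, pushWalk_append]
    exact .append_congr ih₁ ih₂
  | backtrack h p =>
    rename_i x y z
    simp only [pushWalk_cons]
    rw [SimpleGraph.Walk.append_assoc]
    have hloop : WalkHomotopic Λ m
        ((geo hΛ (f x) (f y)).append (geo hΛ (f y) (f x))) .nil := by
      refine WalkHomotopic.cell _ ?_
      have h1 := hf x y h
      have h2 := hf y x h.symm
      simp only [SimpleGraph.Walk.length_append, geo_length]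
      omega
    have := WalkHomotopic.append_congr hloop (.refl (pushWalk hΛ f p))
    simpa using this
  | cell c hc =>
    refine WalkHomotopic.cell _ ?_
    calc (pushWalk hΛ f c).length ≤ k * c.length := pushWalk_length hΛ f hf c
      _ < m := hcell _ hc

/-- One step of descent: if there is no taut loop of length `m`, homotopy in `Γ_{m+1}`
implies homotopy in `Γ_m`. -/
private lemma descend_step {m : ℕ}
    (hm : ∀ (x : V) (d : Γ.Walk x x), d.length = m → WalkHomotopic Γ m d .nil)
    {a b : V} {p q : Γ.Walk a b} (h : WalkHomotopic Γ (m + 1) p q) :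
    WalkHomotopic Γ m p q := by
  induction h with
  | refl p => exact .refl _
  | symm _ ih => exact .symm ih
  | trans _ _ ih₁ ih₂ => exact .trans ih₁ ih₂
  | append_congr _ _ ih₁ ih₂ => exact .append_congr ih₁ ih₂
  | backtrack h p => exact .backtrack h p
  | cell c hc =>
    rcases Nat.lt_succ_iff_lt_or_eq.mp hc with h' | h'
    · exact .cell c h'
    · exact hm _ c h'

private lemma descend {m M : ℕ} (hmM : m ≤ M)
    (hno : ∀ n : ℕ, m ≤ n → n < M → n ∉ tautSpectrum Γ)
    {a b : V} {p q : Γ.Walk a b} (h : WalkHomotopic Γ M p q) :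
    WalkHomotopic Γ m p q := by
  induction M with
  | zero => obtain rfl := Nat.le_zero.mp hmM; exact h
  | succ M ih =>
    rcases eq_or_lt_of_le hmM with h' | h'
    · exact h' ▸ h
    · have h' : m ≤ M := Nat.lt_succ_iff.mp h'
      refine ih h' (fun n h1 h2 => hno n h1 (Nat.lt_succ_of_lt h2)) ?_
      refine descend_step (fun x d hd => ?_) h
      have : M ∉ tautSpectrum Γ := hno M h' (Nat.lt_succ_self M)
      by_contra hcon
      exact this ⟨x, d, hd, by rwa [IsTautLoop, hd]⟩

/-- The key one-sided lemma. -/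
private lemma key_lemma (hΓ : Γ.Connected) (hΛ : Λ.Connected)
    {k : ℕ} (hk : 0 < k) (φ : V → W) (ψ : W → V)
    (hφ : ∀ x y : V, Λ.dist (φ x) (φ y) ≤ k * Γ.dist x y)
    (hψ : ∀ x y : W, Γ.dist (ψ x) (ψ y) ≤ k * Λ.dist x y)
    (hdisp : ∀ x : V, Γ.dist x (ψ (φ x)) ≤ k)
    {l : ℕ} (hl : k ^ 2 + 2 * k + 2 ≤ l) (hmem : l ∈ tautSpectrum Γ) :
    ∃ l' ∈ tautSpectrum Λ, l ≤ k * l' ∧ l' ≤ k * l := by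
  obtain ⟨a, c, hclen, hctaut⟩ := hmem
  by_contra hcon
  push_neg at hcon
  -- edge-Lipschitz bounds
  have hφe : ∀ x y : V, Γ.Adj x y → Λ.dist (φ x) (φ y) ≤ k := by
    intro x y hxy
    have := hφ x y
    rw [SimpleGraph.dist_eq_one_iff_adj.mpr hxy] at this
    simpa using this
  have hψe : ∀ x y : W, Λ.Adj x y → Γ.dist (ψ x) (ψ y) ≤ k := by
    intro x y hxy
    have := hψ x y
    rw [SimpleGraph.dist_eq_one_iff_adj.mpr hxy] at this
    simpa using this
  have hl1 : 1 ≤ l := by nlinarith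
  -- the pushed loop
  set γ : Λ.Walk (φ a) (φ a) := pushWalk hΛ φ c with hγ
  have hγlen : γ.length ≤ k * l := by
    have := pushWalk_length hΛ φ hφe c
    rwa [hclen] at this
  -- the threshold m₀ = ⌈l/k⌉
  obtain ⟨m₀, hkm₀, hkm₀', hm₀le⟩ :
      ∃ m₀ : ℕ, l ≤ k * m₀ ∧ k * (m₀ - 1) ≤ l - 1 ∧ m₀ ≤ k * l := by
    refine ⟨(l - 1) / k + 1, ?_, ?_, ?_⟩
    · have hA1 : k * ((l - 1) / k) + (l - 1) % k = l - 1 := Nat.div_add_mod (l - 1) k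
      have hA2 : (l - 1) % k < k := Nat.mod_lt _ hk
      have key : ∀ A r : ℕ, A + r = l - 1 → r < k → l ≤ A + k := by
        intro A r h1 h2; omega
      rw [Nat.mul_add, Nat.mul_one]
      exact key _ _ hA1 hA2
    · rw [Nat.add_sub_cancel]
      have := Nat.div_mul_le_self (l - 1) k
      calc k * ((l - 1) / k) = (l - 1) / k * k := Nat.mul_comm _ _
        _ ≤ l - 1 := this
    · have h1 : (l - 1) / k ≤ l - 1 := Nat.div_le_self _ _
      calc (l - 1) / k + 1 ≤ (l - 1) + 1 := Nat.add_le_add_right h1 1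
        _ ≤ l := by omega
        _ ≤ k * l := Nat.le_mul_of_pos_left l hk
  -- γ is null-homotopic in Λ_{k*l+1}, hence in Λ_{m₀}
  have hγnull : WalkHomotopic Λ m₀ γ .nil := by
    refine descend (M := k * l + 1) (by omega) (fun n h1 h2 hn => ?_) (WalkHomotopic.cell γ (by omega))
    have h3 : l ≤ k * n := calc
      l ≤ k * m₀ := hkm₀
      _ ≤ k * n := Nat.mul_le_mul_left k h1
    have h4 := hcon n hn h3
    omega
  -- pull back through ψ : null-homotopy of ψ(γ) in Γ_l
  have hpullnull : WalkHomotopic Γ l (pushWalk hΓ ψ γ) .nil := by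
    have := pushWalk_homotopic hΓ ψ hψe
      (l := m₀) (m := l) (fun n hn => by
        have : k * n ≤ k * (m₀ - 1) := Nat.mul_le_mul_left k (by omega)
        omega)
      (by nlinarith) hγnull
    simpa using this
  -- geodesics from x to ψ(φ x)
  have hPlen : ∀ x : V, (geo hΓ x (ψ (φ x))).length ≤ k := fun x => by
    rw [geo_length]; exact hdisp x
  set P : ∀ x : V, Γ.Walk x (ψ (φ x)) := fun x => geo hΓ x (ψ (φ x)) with hP
  -- main homotopy: p ++ P b ≃ P a ++ ψ(φ(p)) in Γ_l
  have main : ∀ {x y : V} (p : Γ.Walk x y),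
      WalkHomotopic Γ l (p.append (P y)) ((P x).append (pushWalk hΓ ψ (pushWalk hΛ φ p))) := by
    intro x y p
    induction p with
    | nil => simpa using WalkHomotopic.refl (P _)
    | cons h p ih =>
      rename_i u v w
      have step1 : WalkHomotopic Γ l ((SimpleGraph.Walk.cons h p).append (P w))
          (SimpleGraph.Walk.cons h ((P v).append (pushWalk hΓ ψ (pushWalk hΛ φ p)))) := by
        rw [SimpleGraph.Walk.cons_append]
        exact WH.cons_congr h ih
      have hsq : WalkHomotopic Γ l (SimpleGraph.Walk.cons h (P v))
          ((P u).append (pushWalk hΓ ψ (geo hΛ (φ u) (φ v)))) := by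
        refine WH.of_length_add_lt _ _ ?_
        have h1 : (P v).length ≤ k := hPlen v
        have h2 : (P u).length ≤ k := hPlen u
        have h3 : (pushWalk hΓ ψ (geo hΛ (φ u) (φ v))).length ≤ k * k := by
          have := pushWalk_length hΓ ψ hψe (geo hΛ (φ u) (φ v))
          have h4 : (geo hΛ (φ u) (φ v)).length ≤ k := by
            rw [geo_length]; exact hφe u v h
          calc (pushWalk hΓ ψ (geo hΛ (φ u) (φ v))).length ≤ k * (geo hΛ (φ u) (φ v)).length :=
              this
            _ ≤ k * k := Nat.mul_le_mul_left k h4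
        simp only [SimpleGraph.Walk.length_cons, SimpleGraph.Walk.length_append]
        nlinarith
      have step2 : WalkHomotopic Γ l
          (SimpleGraph.Walk.cons h ((P v).append (pushWalk hΓ ψ (pushWalk hΛ φ p))))
          ((P u).append (pushWalk hΓ ψ (pushWalk hΛ φ (SimpleGraph.Walk.cons h p)))) := by
        have : WalkHomotopic Γ l
            ((SimpleGraph.Walk.cons h (P v)).append (pushWalk hΓ ψ (pushWalk hΛ φ p)))
            (((P u).append (pushWalk hΓ ψ (geo hΛ (φ u) (φ v)))).append
              (pushWalk hΓ ψ (pushWalk hΛ φ p))) :=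
          WalkHomotopic.append_congr hsq (.refl _)
        rw [SimpleGraph.Walk.cons_append, ← SimpleGraph.Walk.append_assoc] at this
        simpa [pushWalk_append] using this
      exact .trans step1 step2
  -- specialize to the loop c
  have hmain := main c
  -- replace the pushed loop by nil
  have h5 : WalkHomotopic Γ l ((P a).append (pushWalk hΓ ψ (pushWalk hΛ φ c))) (P a) := by
    have := WalkHomotopic.append_congr (.refl (P a)) hpullnull
    simpa using this
  have h6 : WalkHomotopic Γ l (c.append (P a)) ((SimpleGraph.Walk.nil).append (P a)) := by
    simpa using hmain.trans h5
  have h7 : WalkHomotopic Γ l c .nil :=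
    WH.cancel_right (P a) (WH.append_reverse_self _) h6
  have h8 : WalkHomotopic Γ c.length c .nil := by rw [hclen]; exact h7
  exact hctaut h8

end BowditchAux

/-- **Bowditch's Lemma.**  If connected simplicial graphs `Γ` and `Λ` are
`k`-quasi-isometric then their taut loop length spectra are `k`-related: for all
`l ≥ k² + 2k + 2`, if `l ∈ H(Γ)` then there is `l' ∈ H(Λ)` with `l/k ≤ l' ≤ lk`,
and vice versa. -/
theorem tautSpectrum_k_related_of_qi
    {V W : Type*} {Γ : SimpleGraph V} {Λ : SimpleGraph W}
    (hΓ : Γ.Connected) (hΛ : Λ.Connected)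
    (k : ℕ) (hk : 0 < k) (hqi : BowditchQI Γ Λ k) :
    ∀ l : ℕ, k ^ 2 + 2 * k + 2 ≤ l →
      (l ∈ tautSpectrum Γ → ∃ l' ∈ tautSpectrum Λ, l ≤ k * l' ∧ l' ≤ k * l) ∧
      (l ∈ tautSpectrum Λ → ∃ l' ∈ tautSpectrum Γ, l ≤ k * l' ∧ l' ≤ k * l) := by
  obtain ⟨φ, ψ, hφ, hψ, hd₁, hd₂⟩ := hqi
  intro l hl
  exact ⟨key_lemma hΓ hΛ hk φ ψ hφ hψ hd₁ hl,
    key_lemma hΛ hΓ hk ψ φ hψ hφ hd₂ hl⟩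
end

section
/- (Tits' solution to the word problem for right-angled Coxeter groups.) Let W_K be the right-angled Coxeter group of a simplicial graph K (possibly infinite). If a word w = v₁v₂⋯v_l in the standard generators represents the identity element of W_K, then w can be reduced to the empty word by a sequence of moves of two types: (i) replacing a subword vv' by v'v when {v,v'} is an edge of K, and (ii) deleting a subword vv. -/
/-- The relators of the right-angled Coxeter group of a simplicial graph `K`:
`v² = 1` for each vertex `v`, and `(vw)² = 1` for each edge `{v,w}`. -/
def racgRels {V : Type*} (K : SimpleGraph V) : Set (FreeGroup V) :=
  {r | (∃ v : V, r = FreeGroup.of v * FreeGroup.of v) ∨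
    (∃ v w : V, K.Adj v w ∧ r = (FreeGroup.of v * FreeGroup.of w) ^ 2)}

/-- The right-angled Coxeter group of a simplicial graph. -/
def RACG {V : Type*} (K : SimpleGraph V) : Type _ :=
  PresentedGroup (racgRels K)

noncomputable instance {V : Type*} (K : SimpleGraph V) : Group (RACG K) :=
  inferInstanceAs (Group (PresentedGroup (racgRels K)))

/-- Tits moves on words in the vertex generators of a right-angled Coxeter group:
swap two adjacent letters that are joined by an edge of `K`, or delete a repeated
letter `vv`. -/
inductive TitsMove {V : Type*} (K : SimpleGraph V) : List V → List V → Prop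
  | swap (v w : V) (h : K.Adj v w) (p q : List V) :
      TitsMove K (p ++ v :: w :: q) (p ++ w :: v :: q)
  | delete (v : V) (p q : List V) :
      TitsMove K (p ++ v :: v :: q) (p ++ q)

/-!
Let `S` be the set of words that Tits moves reduce to the empty word. Words modulo the
equivalence generated by Tits moves form a group (inverse = reversal) in which the letters
satisfy the defining relations of `W_K`, so a word representing `1` is equivalent to the
empty word, and it suffices that `S` is closed under that equivalence. The only nontrivial
point is that a deletion `pvvq ⟶ pq` preserves `S`. For an induction along the reduction
of `pvvq` this is generalised to deleting two letters `v` separated only by neighbours of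
`v`: such a "far deletion" commutes with every Tits move, up to further Tits moves.
-/

theorem List.append_cons_cons_eq_append_cons {α : Type*} {p' q' p s : List α} {x y v : α}
    (h : p' ++ x :: y :: q' = p ++ v :: s) :
    (∃ r, p = p' ++ x :: y :: r ∧ q' = r ++ v :: s) ∨
    (p' = p ∧ x = v ∧ s = y :: q') ∨
    (p = p' ++ [x] ∧ y = v ∧ s = q') ∨
    (∃ r, p' = p ++ v :: r ∧ s = r ++ x :: y :: q') := by
  rcases List.append_eq_append_iff.1 h with ⟨r, hp, hq⟩ | ⟨r, hp, hq⟩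
  · match r, hp, hq with
    | [], hp, hq =>
      obtain ⟨rfl, rfl⟩ := List.cons_eq_cons.1 hq
      exact Or.inr (Or.inl ⟨by simpa using hp.symm, rfl, rfl⟩)
    | [a], hp, hq =>
      simp only [List.cons_append, List.nil_append, List.cons.injEq] at hq
      obtain ⟨rfl, rfl, rfl⟩ := hq
      exact Or.inr (Or.inr (Or.inl ⟨hp, rfl, rfl⟩))
    | a :: b :: r, hp, hq =>
      simp only [List.cons_append, List.cons.injEq] at hq
      obtain ⟨rfl, rfl, rfl⟩ := hq
      exact Or.inl ⟨r, hp, rfl⟩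
  · match r, hp, hq with
    | [], hp, hq =>
      obtain ⟨rfl, rfl⟩ := List.cons_eq_cons.1 hq
      exact Or.inr (Or.inl ⟨by simpa using hp, rfl, rfl⟩)
    | a :: r, hp, hq =>
      obtain ⟨rfl, rfl⟩ := List.cons_eq_cons.1 hq
      exact Or.inr (Or.inr (Or.inr ⟨r, hp, rfl⟩))

open Relation

section

variable {V : Type*} {K : SimpleGraph V}

namespace TitsMove

theorem append_left {a b : List V} (h : TitsMove K a b) (l : List V) :
    TitsMove K (l ++ a) (l ++ b) := by
  cases h with
  | swap v w hvw p q => simpa using swap v w hvw (l ++ p) q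
  | delete v p q => simpa using delete v (l ++ p) q

theorem append_right {a b : List V} (h : TitsMove K a b) (r : List V) :
    TitsMove K (a ++ r) (b ++ r) := by
  cases h with
  | swap v w hvw p q => simpa using swap v w hvw p (q ++ r)
  | delete v p q => simpa using delete v p (q ++ r)

theorem reverse {a b : List V} (h : TitsMove K a b) : TitsMove K a.reverse b.reverse := by
  cases h with
  | swap v w hvw p q => simpa using swap w v hvw.symm q.reverse p.reverse
  | delete v p q => simpa using delete v q.reverse p.reverse

theorem reflTransGen_push_right {v : V} {m : List V} (hm : ∀ x ∈ m, K.Adj v x)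
    (p q : List V) : ReflTransGen (TitsMove K) (p ++ v :: (m ++ q)) (p ++ (m ++ v :: q)) := by
  induction m generalizing p with
  | nil => exact .refl
  | cons a m ih =>
    rw [List.forall_mem_cons] at hm
    exact .head (swap v a hm.1 p (m ++ q)) (by simpa using ih hm.2 (p ++ [a]))

theorem reflTransGen_push_left {v : V} {m : List V} (hm : ∀ x ∈ m, K.Adj v x)
    (p q : List V) : ReflTransGen (TitsMove K) (p ++ (m ++ v :: q)) (p ++ v :: (m ++ q)) := by
  induction m generalizing p with
  | nil => exact .refl
  | cons a m ih =>
    rw [List.forall_mem_cons] at hm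
    exact .trans (by simpa using ih hm.2 (p ++ [a])) (.single (swap a v hm.1.symm p (m ++ q)))

end TitsMove

def FarDelete (K : SimpleGraph V) (u u' : List V) : Prop :=
  ∃ v p m q, (∀ x ∈ m, K.Adj v x) ∧ u = p ++ v :: (m ++ v :: q) ∧ u' = p ++ (m ++ q)

namespace FarDelete

theorem commute_swap {x y : V} (hxy : K.Adj x y) {p' q' u' : List V}
    (h : FarDelete K (p' ++ x :: y :: q') u') :
    ∃ u₁, ReflGen (FarDelete K) (p' ++ y :: x :: q') u₁ ∧
      ReflTransGen (TitsMove K) u' u₁ := by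
  obtain ⟨v, p, m, q, hm, he, rfl⟩ := h
  -- The move acts inside `p`, on the first `v`, just before it, or to its right;
  -- the last case is split again against the second `v`.
  rcases List.append_cons_cons_eq_append_cons he with
    ⟨r, rfl, rfl⟩ | ⟨rfl, rfl, hs⟩ | ⟨rfl, rfl, rfl⟩ | ⟨r, rfl, hs⟩
  · exact ⟨_, .single ⟨v, p' ++ y :: x :: r, m, q, hm, by simp, rfl⟩,
      .single (by simpa using TitsMove.swap x y hxy p' (r ++ (m ++ q)))⟩
  · obtain _ | ⟨z, m⟩ := m
    · obtain ⟨rfl, -⟩ := List.cons_eq_cons.1 hs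
      exact (K.irrefl hxy).elim
    · obtain ⟨rfl, rfl⟩ := List.cons_eq_cons.1 hs
      rw [List.forall_mem_cons] at hm
      exact ⟨_, .single ⟨x, p' ++ [z], m, q, hm.2, by simp, by simp⟩, .refl⟩
  · exact ⟨_, .single ⟨y, p', x :: m, q, List.forall_mem_cons.2 ⟨hxy.symm, hm⟩, rfl,
      by simp⟩, .refl⟩
  · rcases List.append_cons_cons_eq_append_cons hs.symm with
      ⟨t, rfl, rfl⟩ | ⟨rfl, rfl, rfl⟩ | ⟨rfl, rfl, rfl⟩ | ⟨t, rfl, rfl⟩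
    · refine ⟨_, .single ⟨v, p, r ++ y :: x :: t, q, fun z hz => hm z ?_, by simp, rfl⟩,
        .single (by simpa using TitsMove.swap x y hxy (p ++ r) (t ++ q))⟩
      simp only [List.mem_append, List.mem_cons] at hz ⊢
      tauto
    · exact ⟨_, .single ⟨x, p, r ++ [y], q',
        List.forall_mem_append.2 ⟨hm, List.forall_mem_singleton.2 hxy⟩, by simp, by simp⟩,
        .refl⟩
    · exact ⟨_, .single ⟨y, p, r, x :: q, (List.forall_mem_append.1 hm).1, by simp, by simp⟩,
        .refl⟩
    · exact ⟨_, .single ⟨v, p, m, t ++ y :: x :: q', hm, by simp, rfl⟩,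
        .single (by simpa using TitsMove.swap x y hxy (p ++ (m ++ t)) q')⟩

theorem commute_delete (x : V) {p' q' u' : List V} (h : FarDelete K (p' ++ x :: x :: q') u') :
    ∃ u₁, ReflGen (FarDelete K) (p' ++ q') u₁ ∧ ReflTransGen (TitsMove K) u' u₁ := by
  obtain ⟨v, p, m, q, hm, he, rfl⟩ := h
  rcases List.append_cons_cons_eq_append_cons he with
    ⟨r, rfl, rfl⟩ | ⟨rfl, rfl, hs⟩ | ⟨rfl, rfl, rfl⟩ | ⟨r, rfl, hs⟩
  · exact ⟨_, .single ⟨v, p' ++ r, m, q, hm, by simp, rfl⟩,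
      .single (by simpa using TitsMove.delete x p' (r ++ (m ++ q)))⟩
  · obtain _ | ⟨z, m⟩ := m
    · obtain ⟨-, rfl⟩ := List.cons_eq_cons.1 hs
      exact ⟨_, .refl, .refl⟩
    · obtain ⟨rfl, -⟩ := List.cons_eq_cons.1 hs
      exact (K.irrefl (List.forall_mem_cons.1 hm).1).elim
  · exact ⟨_, .refl, by simpa using TitsMove.reflTransGen_push_right hm p' q⟩
  · rcases List.append_cons_cons_eq_append_cons hs.symm with
      ⟨t, rfl, rfl⟩ | ⟨rfl, rfl, rfl⟩ | ⟨rfl, rfl, -⟩ | ⟨t, rfl, rfl⟩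
    · refine ⟨_, .single ⟨v, p, r ++ t, q, fun z hz => hm z ?_, by simp, rfl⟩,
        .single (by simpa using TitsMove.delete x (p ++ r) (t ++ q))⟩
      simp only [List.mem_append, List.mem_cons] at hz ⊢
      tauto
    · exact ⟨_, .refl, by simpa using TitsMove.reflTransGen_push_left hm p q'⟩
    · exact (K.irrefl ((List.forall_mem_append.1 hm).2 x (by simp))).elim
    · exact ⟨_, .single ⟨v, p, m, t ++ q', hm, by simp, rfl⟩,
        .single (by simpa using TitsMove.delete x (p ++ (m ++ t)) q')⟩

theorem commute {u u₁ u' : List V} (hmove : TitsMove K u u₁) (h : FarDelete K u u') :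
    ∃ u₁', ReflGen (FarDelete K) u₁ u₁' ∧ ReflTransGen (TitsMove K) u' u₁' := by
  cases hmove with
  | swap x y hxy => exact commute_swap hxy h
  | delete x => exact commute_delete x h

theorem reflTransGen_nil {u u' : List V} (h : FarDelete K u u')
    (hu : ReflTransGen (TitsMove K) u []) : ReflTransGen (TitsMove K) u' [] := by
  induction hu using ReflTransGen.head_induction_on generalizing u' with
  | refl =>
    obtain ⟨v, p, m, q, -, he, -⟩ := h
    simp at he
  | head hmove hrest ih =>
    obtain ⟨u₁', hfar | hfar, hred⟩ := commute hmove h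
    · exact hred.trans hrest
    · exact hred.trans (ih hfar)

end FarDelete

theorem TitsMove.reflTransGen_nil_iff_of_eqvGen {a b : List V} (h : EqvGen (TitsMove K) a b) :
    ReflTransGen (TitsMove K) a [] ↔ ReflTransGen (TitsMove K) b [] := by
  induction h with
  | rel a b hab =>
    refine ⟨fun ha => ?_, fun hb => .head hab hb⟩
    cases hab with
    | swap v w hvw p q => exact .head (swap w v hvw.symm p q) ha
    | delete v p q => exact FarDelete.reflTransGen_nil ⟨v, p, [], q, by simp, rfl, rfl⟩ ha
  | refl => exact .rfl
  | symm _ _ _ ih => exact ih.symm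
  | trans _ _ _ _ _ ih₁ ih₂ => exact ih₁.trans ih₂

def TitsWords (K : SimpleGraph V) : Type _ := Quot (TitsMove K)

namespace TitsWords

def mk (w : List V) : TitsWords K := Quot.mk _ w

theorem mk_reverse_append (a : List V) : (mk (a.reverse ++ a) : TitsWords K) = mk [] := by
  induction a with
  | nil => rfl
  | cons v t ih => rw [← ih]; exact Quot.sound (by simpa using TitsMove.delete v t.reverse t)

instance : Group (TitsWords K) where
  mul := Quot.map₂ (· ++ ·) (fun a _ _ h => h.append_left a) (fun _ _ b h => h.append_right b)
  one := mk []
  inv := Quot.map List.reverse fun _ _ => TitsMove.reverse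
  mul_assoc := by
    rintro ⟨a⟩ ⟨b⟩ ⟨c⟩
    exact congrArg mk (List.append_assoc a b c)
  one_mul := by
    rintro ⟨a⟩
    rfl
  mul_one := by
    rintro ⟨a⟩
    exact congrArg mk (List.append_nil a)
  inv_mul_cancel := by
    rintro ⟨a⟩
    exact mk_reverse_append a

theorem racgRels_lift_eq_one :
    ∀ r ∈ racgRels K, FreeGroup.lift (fun v => (mk [v] : TitsWords K)) r = 1 := by
  rintro r (⟨v, rfl⟩ | ⟨v, w, hvw, rfl⟩)
  · exact Quot.sound (TitsMove.delete v [] [])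
  · simp only [pow_two, map_mul, FreeGroup.lift_apply_of]
    calc (mk [v, w, v, w] : TitsWords K) = mk [v, v, w, w] :=
          Quot.sound (TitsMove.swap w v hvw.symm [v] [w])
      _ = mk [w, w] := Quot.sound (TitsMove.delete v [] [w, w])
      _ = mk [] := Quot.sound (TitsMove.delete w [] [])

theorem toGroup_mk_prod (w : List V) :
    PresentedGroup.toGroup racgRels_lift_eq_one
      (PresentedGroup.mk (racgRels K) (w.map FreeGroup.of).prod) = mk w := by
  induction w with
  | nil => exact map_one _
  | cons v w ih =>
    rw [List.map_cons, List.prod_cons, map_mul, map_mul, ih]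
    exact congrArg (· * mk w) (PresentedGroup.toGroup.of racgRels_lift_eq_one)

end TitsWords

end

/-- **Tits' solution to the word problem for right-angled Coxeter groups.**
If a word `w = v₁v₂⋯v_l` in the standard generators represents the identity of the
right-angled Coxeter group `W_K` of a (possibly infinite) simplicial graph `K`, then `w`
can be reduced to the empty word by a sequence of Tits moves. -/
theorem tits_word_problem_racg
    {V : Type*} (K : SimpleGraph V) (w : List V)
    (h : PresentedGroup.mk (racgRels K) ((w.map FreeGroup.of).prod) = 1) :
    Relation.ReflTransGen (TitsMove K) w [] := by
  have hw : (1 : TitsWords K) = TitsWords.mk w := by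
    rw [← TitsWords.toGroup_mk_prod, h, map_one]
  exact (TitsMove.reflTransGen_nil_iff_of_eqvGen (Quot.eqvGen_exact hw)).1 .refl
end
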